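/- Let K ≤ F_d be a subgroup of the free group with rad(K) ≥ r. Then for any coset Kg in the Schreier graph Sch(K) with |Kg| > r, there exists a unique g_r ∈ F_d with |g_r| = r such that every path in Sch(K) from Kg to the root K passes through the vertex K g_r. (A path from Kg to K is a sequence of cosets Kg = α_0, α_1, …, α_m = K where each α_{i+1} = α_i s_i for some s_i ∈ S ∪ S⁻¹.) -/

import Mathlib

open Filter MeasureTheory
open scoped ENNReal Topology

noncomputable section

namespace Paper

variable {G : Type*} [Group G]

def conv (μ ν : PMF G) : PMF G := μ.bind fun x => ν.map fun y => x * y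
def iterConv (μ : PMF G) : ℕ → PMF G
  | 0 => PMF.pure 1
  | t + 1 => conv (iterConv μ t) μ
def wordLength (S : Set G) (x : G) : ℕ :=
  sInf {n | ∃ l : List G, l.length = n ∧ (∀ a ∈ l, a ∈ S) ∧ l.prod = x}
abbrev RightCoset (K : Subgroup G) := Quotient (QuotientGroup.rightRel K)
def rcMk (K : Subgroup G) (g : G) : RightCoset K :=
  Quotient.mk (QuotientGroup.rightRel K) g

/-- Right multiplication by `g` on the space of right cosets: `Kx ↦ Kxg`. -/
def cosetMul (K : Subgroup G) (α : RightCoset K) (g : G) : RightCoset K :=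
  Quotient.liftOn α (fun x => rcMk K (x * g)) (by
    intro a b h
    have h' : b * a⁻¹ ∈ K := QuotientGroup.rightRel_apply.mp h
    apply Quotient.sound
    show QuotientGroup.rightRel K (a * g) (b * g)
    rw [QuotientGroup.rightRel_apply]
    have e : b * g * (a * g)⁻¹ = b * a⁻¹ := by group
    rw [e]; exact h')

/-- The graph distance in the Schreier graph of `K` (w.r.t. the generating set `S`)
from the coset `α` to the root coset `K`. -/
def cosetDist (S : Set G) (K : Subgroup G) (α : RightCoset K) : ℕ :=
  sInf {n | ∃ l : List G, l.length = n ∧ (∀ a ∈ l, a ∈ S) ∧ rcMk K l.prod = α}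

/-- The ball of radius `ρ` about the root in the Schreier graph of `K`. -/
def schreierBall (S : Set G) (K : Subgroup G) (ρ : ℕ) : Set (RightCoset K) :=
  {β | cosetDist S K β ≤ ρ}

open scoped Classical in
/-- The Green function `g_K^{m+}(α, B) = ∑_{t ≥ m} P[α X_t ∈ B]`. -/
def green (μ : PMF G) (K : Subgroup G) (m : ℕ) (α : RightCoset K)
    (B : Set (RightCoset K)) : ℝ≥0∞ :=
  ∑' (t : ℕ) (x : G), if cosetMul K α x ∈ B then iterConv μ (m + t) x else 0

/-- A subgroup `K` is `μ`-transient if the expected number of returns of the induced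
walk on `K\G` to the root is finite, i.e. `∑_t μ^{*t}(K) < ∞`. -/
def IsTransient (μ : PMF G) (K : Subgroup G) : Prop :=
  (∑' (t : ℕ) (x : ↥K), iterConv μ t ↑x) < ⊤

/-- The standard symmetric free generating set of the free group `F_d`. -/
def genSet (d : ℕ) : Set (FreeGroup (Fin d)) :=
  {x | ∃ i : Fin d, x = FreeGroup.of i ∨ x = (FreeGroup.of i)⁻¹}

/-- Word length in the free group. -/
def flen {d : ℕ} (x : FreeGroup (Fin d)) : ℕ := wordLength (genSet d) x

/-- `rad(g)`: the largest `k` such that the reduced word `s_1 ⋯ s_n` of `g` satisfies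
`s_1 ⋯ s_k = (s_{n-k+1} ⋯ s_n)⁻¹`. -/
def freeRad {d : ℕ} (g : FreeGroup (Fin d)) : ℕ :=
  sSup {k : ℕ | k ≤ g.toWord.length ∧
    g.toWord.take k = FreeGroup.invRev (g.toWord.drop (g.toWord.length - k))}

/-- `rad(K) ≥ r`, i.e. every nontrivial element of `K` has `rad` at least `r`. -/
def RadGE {d : ℕ} (K : Subgroup (FreeGroup (Fin d))) (r : ℕ) : Prop :=
  ∀ g ∈ K, g ≠ 1 → r ≤ freeRad g

/-- `pref_r(Kg)`: the `r`-prefix of a vertex of the Schreier graph of `K ≤ F_d`.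
If `|Kg| ≤ r` it is the unique `f` with `|f| = |Kg|` and `Kf = Kg`; if `|Kg| > r` it is
the unique `f` with `|f| = r` such that every path from `Kg` to the root `K` in the
Schreier graph passes through `Kf`.  (Existence and uniqueness hold whenever
`rad(K) ≥ r`.) -/
def prefCoset {d : ℕ} (K : Subgroup (FreeGroup (Fin d))) (r : ℕ)
    (α : RightCoset K) : FreeGroup (Fin d) :=
  if cosetDist (genSet d) K α ≤ r then
    Classical.epsilon fun f : FreeGroup (Fin d) =>
      flen f = cosetDist (genSet d) K α ∧ rcMk K f = α
  else
    Classical.epsilon fun f : FreeGroup (Fin d) =>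
      flen f = r ∧
      ∀ (m : ℕ) (c : ℕ → RightCoset K), c 0 = α → c m = rcMk K 1 →
        (∀ i < m, ∃ s ∈ genSet d, c (i + 1) = cosetMul K (c i) s) →
        ∃ i ≤ m, c i = rcMk K f

/-- The length-`r` prefix of the reduced word of an element of the free group
(the element itself if `|x| ≤ r`). -/
def prefWord {d : ℕ} (r : ℕ) (x : FreeGroup (Fin d)) : FreeGroup (Fin d) :=
  FreeGroup.mk (x.toWord.take r)

/-!
Let `p` be a shortest representative of `Kg` and `f` its prefix of length `r`.

Any path from `Kg` to the root lifts to a path in the Cayley tree of `F_d` from some `z ∈ Kg`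
to `1`, and such a path visits every prefix of `z`. Write `z = h p` with `h ∈ K`. Since `p` is
shortest, at most half of `h` cancels against `p`. If at most `r` letters cancel, `h f` is a
prefix of `z`, so the path visits `K h f = K f`. If more than `r` letters cancel, the first `r`
letters of `z` are those of `h`, and `rad h ≥ r` says that these are the inverses of the last `r`
letters of `h`, i.e. the first `r` letters of `p`; so `f` itself is a prefix of `z`.

For uniqueness, walk from `Kp` to the root along `p`. If this walk meets `K f'` at the prefix
`p_k`, then `k ≤ r` because `p` is shortest, so `f' p_k⁻¹ ∈ K` has length at most `2r`. A
nontrivial `h ∈ K` has `2r ≤ 2 rad h < |h|`, so `f' = p_k`, and comparing lengths gives `f' = f`.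
-/

end Paper

namespace FreeGroup

variable {α : Type*}

theorem take_invRev (L : List (α × Bool)) (k : ℕ) :
    (invRev L).take k = invRev (L.drop (L.length - k)) := by
  simp only [invRev, List.take_reverse, List.length_map, List.map_drop]

theorem getElem_of_take_eq_invRev_drop {L : List (α × Bool)} {k : ℕ}
    (h : L.take k = invRev (L.drop (L.length - k))) {i : ℕ} (hik : i < k)
    (hiL : i < L.length) :
    L[i] = (L[L.length - 1 - i].1, !L[L.length - 1 - i].2) := by
  have := congrArg (·[i]?) h
  simp only [List.getElem?_take, hik, if_true, invRev, List.getElem?_eq_getElem hiL] at this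
  rw [List.getElem?_reverse (by simp; omega)] at this
  rw [List.getElem?_map, List.length_map, List.length_drop, List.getElem?_drop,
    show L.length - k + (L.length - (L.length - k) - 1 - i) = L.length - 1 - i by omega,
    List.getElem?_eq_getElem (by omega)] at this
  simpa using this

theorem IsReduced.two_mul_lt_length {L : List (α × Bool)} (hL : IsReduced L) (hne : L ≠ [])
    {k : ℕ} (h : L.take k = invRev (L.drop (L.length - k))) : 2 * k < L.length := by
  by_contra! hk
  have hpos : 0 < L.length := List.length_pos_iff.mpr hne
  -- the symmetry would pair the middle letter with itself, or the middle two letters together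
  set i := (L.length - 1) / 2
  have hsym := getElem_of_take_eq_invRev_drop h (i := i) (by omega) (by omega)
  rcases Nat.even_or_odd L.length with ⟨n, hn⟩ | ⟨n, hn⟩
  · have hi : L.length - 1 - i = i + 1 := by omega
    simp only [hi] at hsym
    have := hL.getElem i (by omega)
    rw [hsym] at this
    simp at this
  · have hi : L.length - 1 - i = i := by omega
    simp only [hi] at hsym
    have := congrArg Prod.snd hsym
    simp at this

section Reduce

variable [DecidableEq α]

theorem IsReduced.exists_reduce_append {L₁ L₂ : List (α × Bool)} (h₁ : IsReduced L₁)
    (h₂ : IsReduced L₂) :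
    ∃ c a b, L₁ = a ++ invRev c ∧ L₂ = c ++ b ∧ reduce (L₁ ++ L₂) = a ++ b := by
  induction L₂ generalizing L₁ with
  | nil => exact ⟨[], L₁, [], by simp [invRev], by simp, by simpa using h₁.reduce_eq⟩
  | cons x L₂ ih =>
    obtain ⟨y, β⟩ := x
    by_cases hcancel : ∃ L₀, L₁ = L₀ ++ [(y, !β)]
    · obtain ⟨L₀, rfl⟩ := hcancel
      obtain ⟨c, a, b, hL₀, hL₂, hred⟩ :=
        ih (L₁ := L₀) (h₁.infix ⟨[], [(y, !β)], by simp⟩) (h₂.infix ⟨[(y, β)], [], by simp⟩)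
      refine ⟨(y, β) :: c, a, b, by simp [hL₀, invRev], by simp [hL₂], ?_⟩
      rw [List.append_assoc, List.singleton_append, reduce.Step.eq Red.Step.not_rev, hred]
    · refine ⟨[], L₁, (y, β) :: L₂, by simp [invRev], rfl, IsReduced.reduce_eq ?_⟩
      refine List.isChain_append.mpr ⟨h₁, h₂, fun z hz w hw hzw => ?_⟩
      obtain rfl : w = (y, β) := by simpa using hw.symm
      by_contra hne
      have hz' : z = (y, !β) := Prod.ext hzw (Bool.eq_not.mpr hne)
      exact hcancel ⟨L₁.dropLast, by rw [← hz', List.dropLast_append_getLast? z hz]⟩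

theorem exists_toWord_mul (x y : FreeGroup α) :
    ∃ c a b, x.toWord = a ++ invRev c ∧ y.toWord = c ++ b ∧ (x * y).toWord = a ++ b := by
  rw [toWord_mul]
  exact isReduced_toWord.exists_reduce_append isReduced_toWord

theorem toWord_mul_mk_singleton (x : FreeGroup α) (a : α × Bool) :
    (x * mk [a]).toWord = x.toWord ++ [a] ∨ (x * mk [a]).toWord = x.toWord.dropLast := by
  obtain ⟨c, u, v, hx, ha, hxa⟩ := exists_toWord_mul x (mk [a])
  rw [toWord_mk, reduce_singleton, eq_comm, List.append_eq_singleton_iff] at ha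
  rcases ha with ⟨rfl, rfl⟩ | ⟨rfl, rfl⟩
  · left
    simpa [hx, invRev] using hxa
  · right
    simp [hx, hxa, invRev]

theorem toWord_mk_take (x : FreeGroup α) (k : ℕ) :
    (mk (x.toWord.take k)).toWord = x.toWord.take k := by
  rw [toWord_mk]
  exact (isReduced_toWord.infix (List.take_prefix k _).isInfix).reduce_eq

theorem exists_eq_of_prefix_of_path {q : FreeGroup α} {m : ℕ} {x : ℕ → FreeGroup α}
    (hx : ∀ i < m, ∃ a, x (i + 1) = x i * mk [a]) (hq : q.toWord <+: (x 0).toWord)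
    (hm : x m = 1) : ∃ i ≤ m, x i = q := by
  induction m generalizing x with
  | zero =>
    refine ⟨0, le_rfl, toWord_injective ?_⟩
    rw [hm, toWord_one, List.prefix_nil] at hq
    rw [hm, hq, toWord_one]
  | succ m ih =>
    by_cases hq₁ : q.toWord <+: (x 1).toWord
    · obtain ⟨i, hi, hxi⟩ := ih (x := (x <| · + 1)) (fun i hi => hx (i + 1) (by omega)) hq₁ hm
      exact ⟨i + 1, by omega, hxi⟩
    refine ⟨0, by omega, toWord_injective ?_⟩
    obtain ⟨a, hxa⟩ := hx 0 (by omega)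
    rcases toWord_mul_mk_singleton (x 0) a with h | h <;> rw [← hxa] at h
    · exact absurd (h ▸ hq.trans (List.prefix_append _ _)) hq₁
    · refine (hq.eq_of_length (le_antisymm hq.length_le ?_)).symm
      by_contra! hlt
      exact hq₁ (h ▸ List.dropLast_eq_take ▸ List.prefix_take_iff.mpr ⟨hq, by omega⟩)

end Reduce

end FreeGroup

namespace Paper

section Schreier

variable {G : Type*} [Group G] (S : Set G) (K : Subgroup G)

def LiesOnEveryPathToRoot (α β : RightCoset K) : Prop :=
  ∀ (m : ℕ) (c : ℕ → RightCoset K), c 0 = α → c m = rcMk K 1 →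
    (∀ i < m, ∃ s ∈ S, c (i + 1) = cosetMul K (c i) s) → ∃ i ≤ m, c i = β

variable {K}

theorem rcMk_eq_rcMk_iff {x y : G} : rcMk K x = rcMk K y ↔ y * x⁻¹ ∈ K :=
  Quotient.eq.trans QuotientGroup.rightRel_apply

@[simp]
theorem cosetMul_rcMk (x s : G) : cosetMul K (rcMk K x) s = rcMk K (x * s) := rfl

theorem rcMk_mul_of_mem {k : G} (hk : k ∈ K) (x : G) : rcMk K (k * x) = rcMk K x :=
  rcMk_eq_rcMk_iff.mpr (by simpa using inv_mem hk)

theorem exists_lift_of_path {m : ℕ} {c : ℕ → RightCoset K} {y : G} (h₀ : c 0 = rcMk K y)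
    (hc : ∀ i < m, ∃ s ∈ S, c (i + 1) = cosetMul K (c i) s) :
    ∃ x : ℕ → G, (∀ i ≤ m, c i = rcMk K (x i)) ∧
      ∀ i < m, ∃ s ∈ S, x (i + 1) = x i * s := by
  induction m with
  | zero => exact ⟨fun _ => y, fun i hi => by simp_all, by simp⟩
  | succ m ih =>
    obtain ⟨x, hcx, hx⟩ := ih fun i hi => hc i (by omega)
    obtain ⟨s, hs, hcs⟩ := hc m (by omega)
    refine ⟨fun i => if i ≤ m then x i else x m * s, fun i hi => ?_, fun i hi => ?_⟩
    · rcases Nat.le_succ_iff.mp hi with hi | rfl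
      · simpa [hi] using hcx i hi
      · simp [hcs, hcx m le_rfl]
    · rcases Nat.lt_succ_iff_lt_or_eq.mp hi with hi | rfl
      · simpa [hi, hi.le] using hx i hi
      · exact ⟨s, hs, by simp⟩

end Schreier

section Prefix

open FreeGroup hiding norm

variable {d : ℕ}

theorem mem_genSet_iff {s : FreeGroup (Fin d)} : s ∈ genSet d ↔ ∃ a, s = mk [a] := by
  constructor
  · rintro ⟨i, rfl | rfl⟩
    · exact ⟨(i, true), rfl⟩
    · exact ⟨(i, false), inv_mk⟩
  · rintro ⟨⟨i, _ | _⟩, rfl⟩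
    · exact ⟨i, Or.inr (inv_mk (L := [(i, true)])).symm⟩
    · exact ⟨i, Or.inl rfl⟩

theorem inv_mem_genSet {s : FreeGroup (Fin d)} (hs : s ∈ genSet d) : s⁻¹ ∈ genSet d := by
  obtain ⟨i, rfl | rfl⟩ := hs
  · exact ⟨i, Or.inr rfl⟩
  · exact ⟨i, Or.inl (inv_inv _)⟩

theorem norm_prod_le_length {l : List (FreeGroup (Fin d))} (hl : ∀ s ∈ l, s ∈ genSet d) :
    l.prod.norm ≤ l.length := by
  induction l with
  | nil => simp
  | cons s l ih =>
    obtain ⟨a, rfl⟩ := mem_genSet_iff.mp (hl s List.mem_cons_self)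
    calc (mk [a] * l.prod).norm ≤ (mk [a]).norm + l.prod.norm := FreeGroup.norm_mul_le _ _
      _ ≤ 1 + l.length := add_le_add norm_mk_le (ih fun t ht => hl t (List.mem_cons_of_mem _ ht))
      _ = (mk [a] :: l).length := by simp [Nat.add_comm]

theorem exists_genSet_list_prod_eq (x : FreeGroup (Fin d)) :
    ∃ l : List (FreeGroup (Fin d)), l.length = x.norm ∧ (∀ s ∈ l, s ∈ genSet d) ∧ l.prod = x := by
  refine ⟨x.toWord.map fun a => mk [a], by simp [FreeGroup.norm], fun s hs => ?_, ?_⟩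
  · obtain ⟨a, -, rfl⟩ := List.mem_map.mp hs
    exact mem_genSet_iff.mpr ⟨a, rfl⟩
  conv_rhs => rw [← mk_toWord (x := x)]
  induction x.toWord with
  | nil => rfl
  | cons a w ih => rw [List.map_cons, List.prod_cons, ih, mul_mk, List.singleton_append]

theorem flen_eq_norm (x : FreeGroup (Fin d)) : flen x = x.norm := by
  obtain ⟨l, hl, hS, hx⟩ := exists_genSet_list_prod_eq x
  refine le_antisymm (Nat.sInf_le ⟨l, hl, hS, hx⟩) (le_csInf ⟨_, l, hl, hS, hx⟩ ?_)
  rintro n ⟨l', rfl, hS', rfl⟩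
  exact norm_prod_le_length hS'

variable {K : Subgroup (FreeGroup (Fin d))}

theorem cosetDist_rcMk_le_norm (x : FreeGroup (Fin d)) :
    cosetDist (genSet d) K (rcMk K x) ≤ x.norm := by
  obtain ⟨l, hl, hS, hx⟩ := exists_genSet_list_prod_eq x
  exact Nat.sInf_le ⟨l, hl, hS, hx ▸ rfl⟩

theorem exists_rcMk_eq_norm_eq_cosetDist (α : RightCoset K) :
    ∃ p, rcMk K p = α ∧ p.norm = cosetDist (genSet d) K α := by
  obtain ⟨x, rfl⟩ : ∃ x, rcMk K x = α := Quotient.exists_rep α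
  obtain ⟨l, hl, hS, hp⟩ : cosetDist (genSet d) K (rcMk K x) ∈
      {n | ∃ l : List (FreeGroup (Fin d)), l.length = n ∧ (∀ a ∈ l, a ∈ genSet d) ∧
        rcMk K l.prod = rcMk K x} := by
    obtain ⟨l, hl, hS, hx⟩ := exists_genSet_list_prod_eq x
    exact Nat.sInf_mem ⟨_, l, hl, hS, congrArg _ hx⟩
  refine ⟨l.prod, hp, le_antisymm (hl ▸ norm_prod_le_length hS) ?_⟩
  rw [← hp]
  exact cosetDist_rcMk_le_norm _

theorem toWord_prefWord (k : ℕ) (x : FreeGroup (Fin d)) :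
    (prefWord k x).toWord = x.toWord.take k :=
  toWord_mk_take x k

theorem norm_prefWord {k : ℕ} {x : FreeGroup (Fin d)} (hk : k ≤ x.norm) :
    (prefWord k x).norm = k := by
  simpa [FreeGroup.norm, toWord_prefWord] using hk

@[simp]
theorem prefWord_zero (x : FreeGroup (Fin d)) : prefWord 0 x = 1 := rfl

@[simp]
theorem prefWord_norm (x : FreeGroup (Fin d)) : prefWord x.norm x = x := by
  rw [prefWord, FreeGroup.norm, List.take_length, mk_toWord]

theorem prefWord_mul_mk_drop (k : ℕ) (x : FreeGroup (Fin d)) :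
    prefWord k x * mk (x.toWord.drop k) = x := by
  rw [prefWord, mul_mk, List.take_append_drop, mk_toWord]

theorem prefWord_succ {j : ℕ} {x : FreeGroup (Fin d)} (hj : j < x.toWord.length) :
    prefWord (j + 1) x = prefWord j x * mk [x.toWord[j]] := by
  rw [prefWord, prefWord, mul_mk, List.take_concat_get']

theorem freeRad_le_and_take_eq (g : FreeGroup (Fin d)) :
    freeRad g ≤ g.toWord.length ∧
      g.toWord.take (freeRad g) = invRev (g.toWord.drop (g.toWord.length - freeRad g)) :=
  Nat.sSup_mem (s := {k | k ≤ g.toWord.length ∧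
    g.toWord.take k = invRev (g.toWord.drop (g.toWord.length - k))})
    ⟨0, by simp [invRev]⟩ ⟨_, fun _ hk => hk.1⟩

theorem take_eq_invRev_drop_of_le_freeRad {g : FreeGroup (Fin d)} {k : ℕ}
    (hk : k ≤ freeRad g) :
    g.toWord.take k = invRev (g.toWord.drop (g.toWord.length - k)) := by
  obtain ⟨hR, hsym⟩ := freeRad_le_and_take_eq g
  rw [← min_eq_left hk, ← List.take_take, hsym, take_invRev, List.drop_drop, List.length_drop]
  congr 2
  omega

theorem two_mul_freeRad_lt_norm {g : FreeGroup (Fin d)} (hg : g ≠ 1) :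
    2 * freeRad g < g.norm :=
  isReduced_toWord.two_mul_lt_length (mt toWord_eq_nil_iff.mp hg) (freeRad_le_and_take_eq g).2

theorem exists_prefWord_mul_eq {h p : FreeGroup (Fin d)} {r : ℕ} (hr : r ≤ freeRad h)
    (hle : p.norm ≤ (h * p).norm) :
    ∃ k, prefWord k (h * p) = h * prefWord r p ∨ prefWord k (h * p) = prefWord r p := by
  obtain ⟨c, a, b, hh, hp, hhp⟩ := exists_toWord_mul h p
  have hca : c.length ≤ a.length := by simpa [FreeGroup.norm, hp, hhp] using hle
  by_cases hcr : c.length ≤ r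
  · refine ⟨a.length + (r - c.length), Or.inl ?_⟩
    have hpr : p.toWord.take r = c ++ b.take (r - c.length) := by
      rw [hp, List.take_append, List.take_of_length_le hcr]
    rw [prefWord, prefWord, hhp, hpr, List.take_append, List.take_of_length_le (by omega),
      ← mk_toWord (x := h), hh, Nat.add_sub_cancel_left, ← mul_mk, ← mul_mk, ← mul_mk,
      ← inv_mk]
    group
  · refine ⟨r, Or.inr (congrArg mk ?_)⟩
    have hsym := take_eq_invRev_drop_of_le_freeRad hr
    rw [hh, List.take_append_of_le_length (by omega), List.length_append, invRev_length,
      show a.length + c.length - r = a.length + (c.length - r) by omega, ← List.drop_drop,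
      List.drop_left, ← invRev_length (L₁ := c), ← take_invRev, invRev_invRev] at hsym
    rw [hhp, hp, List.take_append_of_le_length (by omega), List.take_append_of_le_length (by omega),
      hsym]

theorem exists_rcMk_prefWord_eq {r : ℕ} (hrad : RadGE K r) {z p : FreeGroup (Fin d)}
    (hzp : rcMk K z = rcMk K p) (hle : p.norm ≤ z.norm) :
    ∃ k, rcMk K (prefWord k z) = rcMk K (prefWord r p) := by
  obtain ⟨h, hK, rfl⟩ : ∃ h ∈ K, h * p = z :=
    ⟨z * p⁻¹, rcMk_eq_rcMk_iff.mp hzp.symm, inv_mul_cancel_right z p⟩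
  by_cases h1 : h = 1
  · exact ⟨r, by rw [h1, one_mul]⟩
  obtain ⟨k, hk | hk⟩ := exists_prefWord_mul_eq (hrad h hK h1) hle
  · exact ⟨k, by rw [hk, rcMk_mul_of_mem hK]⟩
  · exact ⟨k, congrArg _ hk⟩

theorem liesOnEveryPathToRoot_rcMk_prefWord {r : ℕ} (hrad : RadGE K r)
    {p : FreeGroup (Fin d)} (hp : p.norm = cosetDist (genSet d) K (rcMk K p)) :
    LiesOnEveryPathToRoot (genSet d) K (rcMk K p) (rcMk K (prefWord r p)) := by
  intro m c h₀ hm hc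
  obtain ⟨x, hcx, hx⟩ := exists_lift_of_path _ h₀ hc
  have hxm : (x m)⁻¹ ∈ K := by
    simpa using rcMk_eq_rcMk_iff.mp ((hcx m le_rfl).symm.trans hm)
  set y := fun i => (x m)⁻¹ * x i
  have hcy : ∀ i ≤ m, c i = rcMk K (y i) :=
    fun i hi => (hcx i hi).trans (rcMk_mul_of_mem hxm _).symm
  have hy₀ : rcMk K (y 0) = rcMk K p := (hcy 0 (Nat.zero_le _)).symm.trans h₀
  obtain ⟨k, hk⟩ := exists_rcMk_prefWord_eq hrad hy₀
    (hp ▸ hy₀ ▸ cosetDist_rcMk_le_norm (y 0))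
  have hy : ∀ i < m, ∃ a, y (i + 1) = y i * mk [a] := by
    intro i hi
    obtain ⟨s, hs, hxs⟩ := hx i hi
    obtain ⟨a, rfl⟩ := mem_genSet_iff.mp hs
    exact ⟨a, by simp [y, hxs, mul_assoc]⟩
  obtain ⟨i, hi, hyi⟩ := exists_eq_of_prefix_of_path hy
    (toWord_prefWord k (y 0) ▸ List.take_prefix _ _) (inv_mul_cancel (x m))
  exact ⟨i, hi, by rw [hcy i hi, hyi, hk]⟩

theorem exists_rcMk_prefWord_eq_of_liesOnEveryPathToRoot {p : FreeGroup (Fin d)}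
    {β : RightCoset K} (h : LiesOnEveryPathToRoot (genSet d) K (rcMk K p) β) :
    ∃ k ≤ p.norm, rcMk K (prefWord k p) = β := by
  have hpath : ∀ i < p.norm, ∃ s ∈ genSet d, rcMk K (prefWord (p.norm - (i + 1)) p) =
      cosetMul K (rcMk K (prefWord (p.norm - i) p)) s := by
    intro i hi
    have hi' : p.norm - (i + 1) < p.toWord.length := by unfold FreeGroup.norm at hi ⊢; omega
    refine ⟨_, inv_mem_genSet (mem_genSet_iff.mpr ⟨p.toWord[p.norm - (i + 1)], rfl⟩), ?_⟩
    rw [cosetMul_rcMk, show p.norm - i = p.norm - (i + 1) + 1 by omega, prefWord_succ hi',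
      mul_inv_cancel_right]
  obtain ⟨i, -, hβ⟩ := h p.norm (fun i => rcMk K (prefWord (p.norm - i) p))
    (by rw [Nat.sub_zero, prefWord_norm]) (by rw [Nat.sub_self, prefWord_zero]) hpath
  exact ⟨p.norm - i, Nat.sub_le _ _, hβ⟩

theorem eq_prefWord_of_rcMk_prefWord_eq {r : ℕ} (hrad : RadGE K r) {p f : FreeGroup (Fin d)}
    (hp : p.norm = cosetDist (genSet d) K (rcMk K p)) (hf : f.norm = r) {k : ℕ}
    (hk : k ≤ p.norm) (hkf : rcMk K (prefWord k p) = rcMk K f) : f = prefWord r p := by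
  have hkr : k ≤ r := by
    have hpf : rcMk K p = rcMk K (f * mk (p.toWord.drop k)) := by
      rw [← cosetMul_rcMk, ← hkf, cosetMul_rcMk, prefWord_mul_mk_drop]
    have : p.norm ≤ r + (p.norm - k) := calc
      p.norm ≤ (f * mk (p.toWord.drop k)).norm := hp ▸ hpf ▸ cosetDist_rcMk_le_norm _
      _ ≤ f.norm + (mk (p.toWord.drop k)).norm := FreeGroup.norm_mul_le _ _
      _ ≤ r + (p.norm - k) := hf ▸ add_le_add_right (List.length_drop ▸ norm_mk_le) _
    omega
  have hfk : f = prefWord k p := by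
    by_contra hne
    have h1 : f * (prefWord k p)⁻¹ ≠ 1 := mt mul_inv_eq_one.mp hne
    have := hrad _ (rcMk_eq_rcMk_iff.mp hkf) h1
    have := two_mul_freeRad_lt_norm h1
    have := FreeGroup.norm_mul_le f (prefWord k p)⁻¹
    rw [FreeGroup.norm_inv_eq, norm_prefWord hk] at this
    omega
  obtain rfl : k = r := by rw [← hf, hfk, norm_prefWord hk]
  exact hfk

end Prefix

theorem unique_prefix_of_radGE_general (d r : ℕ)
    (K : Subgroup (FreeGroup (Fin d))) (hrad : RadGE K r)
    (g : FreeGroup (Fin d))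
    (hfar : r < cosetDist (genSet d) K (rcMk K g)) :
    ∃! f : FreeGroup (Fin d), flen f = r ∧
      ∀ (m : ℕ) (c : ℕ → RightCoset K),
        c 0 = rcMk K g → c m = rcMk K 1 →
        (∀ i < m, ∃ s ∈ genSet d, c (i + 1) = cosetMul K (c i) s) →
        ∃ i ≤ m, c i = rcMk K f := by
  obtain ⟨p, hpg, hp⟩ := exists_rcMk_eq_norm_eq_cosetDist (rcMk K g)
  rw [← hpg] at hfar hp ⊢
  refine ⟨prefWord r p, ⟨?_, liesOnEveryPathToRoot_rcMk_prefWord hrad hp⟩, ?_⟩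
  · rw [flen_eq_norm, norm_prefWord (hp ▸ hfar).le]
  · rintro f ⟨hf, hpass⟩
    obtain ⟨k, hk, hkf⟩ := exists_rcMk_prefWord_eq_of_liesOnEveryPathToRoot hpass
    exact eq_prefWord_of_rcMk_prefWord_eq hrad hp ((flen_eq_norm f).symm.trans hf) hk hkf

/-- **Proposition 3.4.** If `rad(K) ≥ r`, then for any coset `Kg` in the Schreier graph
of `K ≤ F_d` at distance more than `r` from the root, there is a unique `g_r ∈ F_d`
with `|g_r| = r` such that every path in the Schreier graph from `Kg` to the root `K`
passes through `K g_r`. -/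
theorem unique_prefix_of_radGE (d r : ℕ) (hd : 2 ≤ d)
    (K : Subgroup (FreeGroup (Fin d))) (hrad : RadGE K r)
    (g : FreeGroup (Fin d))
    (hfar : r < cosetDist (genSet d) K (rcMk K g)) :
    ∃! f : FreeGroup (Fin d), flen f = r ∧
      ∀ (m : ℕ) (c : ℕ → RightCoset K),
        c 0 = rcMk K g → c m = rcMk K 1 →
        (∀ i < m, ∃ s ∈ genSet d, c (i + 1) = cosetMul K (c i) s) →
        ∃ i ≤ m, c i = rcMk K f :=
  unique_prefix_of_radGE_general d r K hrad g hfar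

end Paper
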